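/- For every integer n ≥ 2, the game n·↑ + * is equivalent to the game {0 | (n−1)·↑}. -/

import Mathlib

universe u

namespace SetTheory

/-- Pre-games, as in Mathlib's former `SetTheory.PGame` (removed from Mathlib). -/
inductive PGame : Type (u + 1)
  | mk : ∀ α β : Type u, (α → PGame) → (β → PGame) → PGame

namespace PGame

def LeftMoves : PGame → Type u
  | mk l _ _ _ => l

def RightMoves : PGame → Type u
  | mk _ r _ _ => r

def moveLeft : ∀ g : PGame, LeftMoves g → PGame
  | mk _l _ L _ => L

def moveRight : ∀ g : PGame, RightMoves g → PGame
  | mk _ _r _ R => R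

inductive IsOption : PGame → PGame → Prop
  | moveLeft {x : PGame} (i : x.LeftMoves) : IsOption (x.moveLeft i) x
  | moveRight {x : PGame} (i : x.RightMoves) : IsOption (x.moveRight i) x

theorem wf_isOption : WellFounded IsOption :=
  ⟨fun x => by
    induction x with
    | mk l r L R IHl IHr =>
      refine ⟨_, fun y h => ?_⟩
      cases h with
      | moveLeft i => exact IHl i
      | moveRight j => exact IHr j⟩

instance : WellFoundedRelation PGame :=
  ⟨IsOption, wf_isOption⟩

instance : Zero PGame :=
  ⟨⟨PEmpty, PEmpty, PEmpty.elim, PEmpty.elim⟩⟩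

instance : One PGame :=
  ⟨⟨PUnit, PEmpty, fun _ => 0, PEmpty.elim⟩⟩

def ofLists (L R : List PGame.{u}) : PGame.{u} :=
  mk (ULift (Fin L.length)) (ULift (Fin R.length)) (fun i => L.get i.down) fun j => R.get j.down

def star : PGame.{u} :=
  ⟨PUnit, PUnit, fun _ => 0, fun _ => 0⟩

def neg : PGame → PGame
  | ⟨l, r, L, R⟩ => ⟨r, l, fun i => neg (R i), fun i => neg (L i)⟩

instance : Neg PGame :=
  ⟨neg⟩

theorem isOption_mk_left {xl xr : Type u} (xL : xl → PGame) (xR : xr → PGame) (i : xl) :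
    IsOption (xL i) (mk xl xr xL xR) :=
  IsOption.moveLeft (x := mk xl xr xL xR) i

theorem isOption_mk_right {xl xr : Type u} (xL : xl → PGame) (xR : xr → PGame) (i : xr) :
    IsOption (xR i) (mk xl xr xL xR) :=
  IsOption.moveRight (x := mk xl xr xL xR) i

def add : PGame.{u} → PGame.{u} → PGame.{u}
  | mk xl xr xL xR, mk yl yr yL yR =>
    mk (xl ⊕ yl) (xr ⊕ yr)
      (Sum.rec (fun i => add (xL i) (mk yl yr yL yR)) fun i => add (mk xl xr xL xR) (yL i))
      (Sum.rec (fun i => add (xR i) (mk yl yr yL yR)) fun i => add (mk xl xr xL xR) (yR i))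
termination_by x y => (x, y)
decreasing_by
  all_goals first
    | exact Prod.Lex.left _ _ (isOption_mk_left _ _ _)
    | exact Prod.Lex.left _ _ (isOption_mk_right _ _ _)
    | exact Prod.Lex.right _ (isOption_mk_left _ _ _)
    | exact Prod.Lex.right _ (isOption_mk_right _ _ _)

instance : Add PGame.{u} :=
  ⟨add⟩

/-- The pair (`x ≤ y`, `x ⧏ y`), defined by simultaneous induction as in former Mathlib. -/
noncomputable def leLF (x y : PGame.{u}) : Prop × Prop := by
  induction x generalizing y with | mk xl xr xL xR IHxl IHxr => _
  induction y with | mk yl yr yL yR IHyl IHyr => _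
  exact ((∀ i, (IHxl i (mk yl yr yL yR)).2) ∧ ∀ j, (IHyr j).2,
    (∃ i, (IHyl i).1) ∨ ∃ j, (IHxr j (mk yl yr yL yR)).1)

noncomputable instance : LE PGame :=
  ⟨fun x y => (leLF x y).1⟩

instance : LT PGame :=
  ⟨fun x y => x ≤ y ∧ ¬y ≤ x⟩

def Equiv (x y : PGame) : Prop :=
  x ≤ y ∧ y ≤ x

instance : HasEquiv PGame :=
  ⟨Equiv⟩

end PGame

end SetTheory
open SetTheory PGame
open scoped PGame

/-- The game up, ↑ = {0 | *}. -/
def upG : PGame := ofLists [0] [star]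

/-- The game down, ↓ = {* | 0}. -/
def downG : PGame := ofLists [star] [0]

/-- `copies n G` is the disjunctive sum of `n` copies of `G`. -/
def copies : ℕ → PGame → PGame
  | 0, _ => 0
  | n + 1, G => copies n G + G

/-- A game is dicotic (all-small) if either it has no options for either player, or
both players have at least one option and every option is dicotic. -/
def Dicotic (G : PGame) : Prop :=
  (IsEmpty G.LeftMoves ∧ IsEmpty G.RightMoves ∨
    Nonempty G.LeftMoves ∧ Nonempty G.RightMoves) ∧
    (∀ i, Dicotic (G.moveLeft i)) ∧ ∀ j, Dicotic (G.moveRight j)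
termination_by G
decreasing_by
  · exact .moveLeft _
  · exact .moveRight _

/-- The dicotic transformation δ: every empty option set is replaced by the single option 0. -/
def delta : PGame → PGame
  | PGame.mk l r L R =>
    PGame.mk (l ⊕ PLift (IsEmpty l)) (r ⊕ PLift (IsEmpty r))
      (Sum.rec (fun i => delta (L i)) fun _ => 0)
      (Sum.rec (fun j => delta (R j)) fun _ => 0)

/-- A game is infinitesimal if every positive multiple lies strictly between -1 and 1. -/
def Infinitesimal (G : PGame) : Prop :=
  ∀ n : ℕ, 0 < n → copies n G < 1 ∧ -1 < copies n G

/-! Put `Z = {0 | m·↑}`. Up to equivalence, the left options of `k·↑` are `(k-1)·↑` and its right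
options `(k-1)·↑ + *`; together with `* + * = 0` this makes `Z ≤ (m+1)·↑ + *` a check of options.
The converse `(m+1)·↑ + * ≤ Z` holds for `m ≥ 1` but is not a one-step check: it is the top case
of a simultaneous induction on `k` comparing `Z` with `k·↑` and with `k·↑ + *`, in which each
comparison follows by one move from comparisons with fewer copies of `↑` (and, for `k·↑ + * ≤ Z`,
from `k·↑ ⧏ Z`). -/

namespace SetTheory

namespace PGame

def LF (x y : PGame) : Prop := (leLF x y).2

infix:50 " ⧏ " => SetTheory.PGame.LF

theorem le_iff_forall_lf {x y : PGame} :
    x ≤ y ↔ (∀ i, x.moveLeft i ⧏ y) ∧ ∀ j, x ⧏ y.moveRight j := by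
  cases x; cases y; exact Iff.rfl

theorem lf_iff_exists_le {x y : PGame} :
    x ⧏ y ↔ (∃ i, x ≤ y.moveLeft i) ∨ ∃ j, x.moveRight j ≤ y := by
  cases x; cases y; exact Iff.rfl

theorem not_le_and_not_lf (x y : PGame) : (¬x ≤ y ↔ y ⧏ x) ∧ (¬x ⧏ y ↔ y ≤ x) := by
  induction x generalizing y with
  | mk xl xr xL xR IHxl IHxr =>
  induction y with
  | mk yl yr yL yR IHyl IHyr =>
  rw [le_iff_forall_lf, lf_iff_exists_le, lf_iff_exists_le, le_iff_forall_lf]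
  constructor
  · rw [not_and_or, not_forall, not_forall]
    exact or_congr (exists_congr fun i => (IHxl i _).2) (exists_congr fun j => (IHyr j).2)
  · rw [not_or, not_exists, not_exists]
    exact and_congr (forall_congr' fun i => (IHyl i).1) (forall_congr' fun j => (IHxr j _).1)

theorem not_le {x y : PGame} : ¬x ≤ y ↔ y ⧏ x := (not_le_and_not_lf x y).1

theorem not_lf {x y : PGame} : ¬x ⧏ y ↔ y ≤ x := (not_le_and_not_lf x y).2

theorem le_of_forall_lf {x y : PGame} (h₁ : ∀ i, x.moveLeft i ⧏ y)
    (h₂ : ∀ j, x ⧏ y.moveRight j) : x ≤ y :=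
  le_iff_forall_lf.2 ⟨h₁, h₂⟩

theorem lf_of_le_moveLeft {x y : PGame} {i : y.LeftMoves} (h : x ≤ y.moveLeft i) : x ⧏ y :=
  lf_iff_exists_le.2 (Or.inl ⟨i, h⟩)

theorem lf_of_moveRight_le {x y : PGame} {j : x.RightMoves} (h : x.moveRight j ≤ y) : x ⧏ y :=
  lf_iff_exists_le.2 (Or.inr ⟨j, h⟩)

theorem moveLeft_lf_of_le {x y : PGame} (h : x ≤ y) (i : x.LeftMoves) : x.moveLeft i ⧏ y :=
  (le_iff_forall_lf.1 h).1 i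

theorem lf_moveRight_of_le {x y : PGame} (h : x ≤ y) (j : y.RightMoves) : x ⧏ y.moveRight j :=
  (le_iff_forall_lf.1 h).2 j

theorem le_refl' (x : PGame) : x ≤ x := by
  induction x with
  | mk _ _ _ _ IHl IHr =>
    exact le_of_forall_lf (fun i => lf_of_le_moveLeft (i := i) (IHl i))
      (fun j => lf_of_moveRight_le (j := j) (IHr j))

theorem le_trans_of_options {x y z : PGame}
    (h₁ : ∀ {i}, y ≤ z → z ≤ x.moveLeft i → y ≤ x.moveLeft i)
    (h₂ : ∀ {j}, z.moveRight j ≤ x → x ≤ y → z.moveRight j ≤ y) (hxy : x ≤ y) (hyz : y ≤ z) :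
    x ≤ z :=
  le_of_forall_lf (fun i => not_le.1 fun h => not_lf.2 (h₁ hyz h) (moveLeft_lf_of_le hxy i))
    fun j => not_le.1 fun h => not_lf.2 (h₂ h hxy) (lf_moveRight_of_le hyz j)

-- The three rotations of transitivity have to be proved together.
theorem le_trans_rotations (x y z : PGame) :
    (x ≤ y → y ≤ z → x ≤ z) ∧ (y ≤ z → z ≤ x → y ≤ x) ∧ (z ≤ x → x ≤ y → z ≤ y) := by
  induction x generalizing y z with
  | mk xl xr xL xR IHxl IHxr =>
  induction y generalizing z with
  | mk yl yr yL yR IHyl IHyr =>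
  induction z with
  | mk zl zr zL zR IHzl IHzr =>
  exact ⟨le_trans_of_options (fun {i} => (IHxl i _ _).2.1) fun {j} => (IHzr j).2.2,
    le_trans_of_options (fun {i} => (IHyl i _).2.2) fun {j} => (IHxr j _ _).1,
    le_trans_of_options (fun {i} => (IHzl i).1) fun {j} => (IHyr j _).2.1⟩

noncomputable instance : Preorder PGame :=
  { le_refl := le_refl'
    le_trans := fun x y z => (le_trans_rotations x y z).1
    lt_iff_le_not_ge := fun _ _ => Iff.rfl }

theorem le_lf_trans {x y z : PGame} (h₁ : x ≤ y) (h₂ : y ⧏ z) : x ⧏ z :=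
  not_le.1 fun h => not_le.2 h₂ (le_trans h h₁)

theorem lf_le_trans {x y z : PGame} (h₁ : x ⧏ y) (h₂ : y ≤ z) : x ⧏ z :=
  not_le.1 fun h => not_le.2 h₁ (le_trans h₂ h)

theorem le_of_forall_exists {x y : PGame} (h₁ : ∀ i, ∃ i', x.moveLeft i ≤ y.moveLeft i')
    (h₂ : ∀ j, ∃ j', x.moveRight j' ≤ y.moveRight j) : x ≤ y :=
  le_of_forall_lf
    (fun i => (h₁ i).elim fun i' h => le_lf_trans h (moveLeft_lf_of_le le_rfl i'))
    (fun j => (h₂ j).elim fun j' h => lf_le_trans (lf_moveRight_of_le le_rfl j') h)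

theorem equiv_rfl {x : PGame} : x ≈ x := ⟨le_rfl, le_rfl⟩

theorem Equiv.symm {x y : PGame} (h : x ≈ y) : y ≈ x := ⟨h.2, h.1⟩

theorem Equiv.trans {x y z : PGame} (h₁ : x ≈ y) (h₂ : y ≈ z) : x ≈ z :=
  ⟨le_trans h₁.1 h₂.1, le_trans h₂.2 h₁.2⟩

instance : @Trans PGame PGame PGame HasEquiv.Equiv HasEquiv.Equiv HasEquiv.Equiv :=
  ⟨Equiv.trans⟩

theorem le_of_equiv_of_le {x y z : PGame} (h₁ : x ≈ y) (h₂ : y ≤ z) : x ≤ z := le_trans h₁.1 h₂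

theorem le_of_le_of_equiv {x y z : PGame} (h₁ : x ≤ y) (h₂ : y ≈ z) : x ≤ z := le_trans h₁ h₂.1

theorem lf_of_equiv_of_lf {x y z : PGame} (h₁ : x ≈ y) (h₂ : y ⧏ z) : x ⧏ z := le_lf_trans h₁.1 h₂

@[simp]
theorem moveLeft_mk {xl xr : Type u} (xL : xl → PGame) (xR : xr → PGame)
    (i : (mk xl xr xL xR).LeftMoves) :
    (mk xl xr xL xR).moveLeft i = xL i := rfl

@[simp]
theorem moveRight_mk {xl xr : Type u} (xL : xl → PGame) (xR : xr → PGame)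
    (j : (mk xl xr xL xR).RightMoves) :
    (mk xl xr xL xR).moveRight j = xR j := rfl

theorem mk_add_mk (xl xr : Type u) (xL : xl → PGame) (xR : xr → PGame)
    (yl yr : Type u) (yL : yl → PGame) (yR : yr → PGame) :
    mk xl xr xL xR + mk yl yr yL yR = mk (xl ⊕ yl) (xr ⊕ yr)
      (Sum.rec (fun i => xL i + mk yl yr yL yR) fun i => mk xl xr xL xR + yL i)
      (Sum.rec (fun i => xR i + mk yl yr yL yR) fun i => mk xl xr xL xR + yR i) := by
  show add _ _ = _
  rw [add]
  rfl

theorem leftMoves_add (x y : PGame) : (x + y).LeftMoves = (x.LeftMoves ⊕ y.LeftMoves) := by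
  cases x; cases y; rw [mk_add_mk]; rfl

theorem rightMoves_add (x y : PGame) : (x + y).RightMoves = (x.RightMoves ⊕ y.RightMoves) := by
  cases x; cases y; rw [mk_add_mk]; rfl

def toLeftMovesAdd {x y : PGame} : x.LeftMoves ⊕ y.LeftMoves ≃ (x + y).LeftMoves :=
  _root_.Equiv.cast (leftMoves_add x y).symm

def toRightMovesAdd {x y : PGame} : x.RightMoves ⊕ y.RightMoves ≃ (x + y).RightMoves :=
  _root_.Equiv.cast (rightMoves_add x y).symm

theorem exists_toLeftMovesAdd {x y : PGame} (k : (x + y).LeftMoves) :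
    ∃ s, toLeftMovesAdd s = k := toLeftMovesAdd.surjective k

theorem exists_toRightMovesAdd {x y : PGame} (k : (x + y).RightMoves) :
    ∃ s, toRightMovesAdd s = k := toRightMovesAdd.surjective k

theorem moveLeft_cast {G H : PGame} (e : G = H) (i : G.LeftMoves) :
    H.moveLeft (cast (congrArg LeftMoves e) i) = G.moveLeft i := by
  subst e; rfl

theorem moveRight_cast {G H : PGame} (e : G = H) (i : G.RightMoves) :
    H.moveRight (cast (congrArg RightMoves e) i) = G.moveRight i := by
  subst e; rfl

@[simp]
theorem add_moveLeft_inl (x y : PGame) (i : x.LeftMoves) :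
    (x + y).moveLeft (toLeftMovesAdd (Sum.inl i)) = x.moveLeft i + y := by
  cases x; cases y
  exact moveLeft_cast (mk_add_mk ..).symm (Sum.inl i)

@[simp]
theorem add_moveLeft_inr (x y : PGame) (i : y.LeftMoves) :
    (x + y).moveLeft (toLeftMovesAdd (Sum.inr i)) = x + y.moveLeft i := by
  cases x; cases y
  exact moveLeft_cast (mk_add_mk ..).symm (Sum.inr i)

@[simp]
theorem add_moveRight_inl (x y : PGame) (i : x.RightMoves) :
    (x + y).moveRight (toRightMovesAdd (Sum.inl i)) = x.moveRight i + y := by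
  cases x; cases y
  exact moveRight_cast (mk_add_mk ..).symm (Sum.inl i)

@[simp]
theorem add_moveRight_inr (x y : PGame) (i : y.RightMoves) :
    (x + y).moveRight (toRightMovesAdd (Sum.inr i)) = x + y.moveRight i := by
  cases x; cases y
  exact moveRight_cast (mk_add_mk ..).symm (Sum.inr i)

theorem add_zero_equiv (x : PGame) : x + 0 ≈ x := by
  induction x with
  | mk xl xr xL xR IHl IHr =>
  refine ⟨le_of_forall_exists (fun k => ?_) (fun j => ?_),
    le_of_forall_exists (fun i => ?_) (fun k => ?_)⟩
  · obtain ⟨i | i, rfl⟩ := exists_toLeftMovesAdd k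
    · exact ⟨i, by rw [add_moveLeft_inl]; exact (IHl i).1⟩
    · exact PEmpty.elim i
  · exact ⟨toRightMovesAdd (Sum.inl j), by rw [add_moveRight_inl]; exact (IHr j).1⟩
  · exact ⟨toLeftMovesAdd (Sum.inl i), by rw [add_moveLeft_inl]; exact (IHl i).2⟩
  · obtain ⟨j | j, rfl⟩ := exists_toRightMovesAdd k
    · exact ⟨j, by rw [add_moveRight_inl]; exact (IHr j).2⟩
    · exact PEmpty.elim j

theorem add_comm_le (x y : PGame) : x + y ≤ y + x := by
  induction x generalizing y with
  | mk xl xr xL xR IHxl IHxr =>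
  induction y with
  | mk yl yr yL yR IHyl IHyr =>
  refine le_of_forall_exists (fun k => ?_) (fun k => ?_)
  · obtain ⟨i | i, rfl⟩ := exists_toLeftMovesAdd k
    · exact ⟨toLeftMovesAdd (Sum.inr i), by simpa using IHxl i _⟩
    · exact ⟨toLeftMovesAdd (Sum.inl i), by simpa using IHyl i⟩
  · obtain ⟨j | j, rfl⟩ := exists_toRightMovesAdd k
    · exact ⟨toRightMovesAdd (Sum.inr j), by simpa using IHyr j⟩
    · exact ⟨toRightMovesAdd (Sum.inl j), by simpa using IHxr j _⟩

theorem add_comm_equiv (x y : PGame) : x + y ≈ y + x := ⟨add_comm_le x y, add_comm_le y x⟩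

theorem add_assoc_le (x y z : PGame) : x + y + z ≤ x + (y + z) := by
  induction x generalizing y z with
  | mk xl xr xL xR IHx IHxr =>
  induction y generalizing z with
  | mk yl yr yL yR IHy IHyr =>
  induction z with
  | mk zl zr zL zR IHz IHzr =>
  refine le_of_forall_exists (fun k => ?_) (fun k => ?_)
  · obtain ⟨k | i, rfl⟩ := exists_toLeftMovesAdd k
    · obtain ⟨i | i, rfl⟩ := exists_toLeftMovesAdd k
      · exact ⟨toLeftMovesAdd (Sum.inl i), by simpa using IHx i _ _⟩
      · exact ⟨toLeftMovesAdd (Sum.inr (toLeftMovesAdd (Sum.inl i))), by simpa using IHy i _⟩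
    · exact ⟨toLeftMovesAdd (Sum.inr (toLeftMovesAdd (Sum.inr i))), by simpa using IHz i⟩
  · obtain ⟨i | k, rfl⟩ := exists_toRightMovesAdd k
    · exact ⟨toRightMovesAdd (Sum.inl (toRightMovesAdd (Sum.inl i))), by simpa using IHxr i _ _⟩
    · obtain ⟨i | i, rfl⟩ := exists_toRightMovesAdd k
      · exact ⟨toRightMovesAdd (Sum.inl (toRightMovesAdd (Sum.inr i))), by simpa using IHyr i _⟩
      · exact ⟨toRightMovesAdd (Sum.inr i), by simpa using IHzr i⟩

theorem le_add_assoc (x y z : PGame) : x + (y + z) ≤ x + y + z := by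
  induction x generalizing y z with
  | mk xl xr xL xR IHx IHxr =>
  induction y generalizing z with
  | mk yl yr yL yR IHy IHyr =>
  induction z with
  | mk zl zr zL zR IHz IHzr =>
  refine le_of_forall_exists (fun k => ?_) (fun k => ?_)
  · obtain ⟨i | k, rfl⟩ := exists_toLeftMovesAdd k
    · exact ⟨toLeftMovesAdd (Sum.inl (toLeftMovesAdd (Sum.inl i))), by simpa using IHx i _ _⟩
    · obtain ⟨i | i, rfl⟩ := exists_toLeftMovesAdd k
      · exact ⟨toLeftMovesAdd (Sum.inl (toLeftMovesAdd (Sum.inr i))), by simpa using IHy i _⟩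
      · exact ⟨toLeftMovesAdd (Sum.inr i), by simpa using IHz i⟩
  · obtain ⟨k | i, rfl⟩ := exists_toRightMovesAdd k
    · obtain ⟨i | i, rfl⟩ := exists_toRightMovesAdd k
      · exact ⟨toRightMovesAdd (Sum.inl i), by simpa using IHxr i _ _⟩
      · exact ⟨toRightMovesAdd (Sum.inr (toRightMovesAdd (Sum.inl i))), by simpa using IHyr i _⟩
    · exact ⟨toRightMovesAdd (Sum.inr (toRightMovesAdd (Sum.inr i))), by simpa using IHzr i⟩

theorem add_assoc_equiv (x y z : PGame) : x + y + z ≈ x + (y + z) :=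
  ⟨add_assoc_le x y z, le_add_assoc x y z⟩

-- Monotonicity for `≤` and for `⧏` have to be proved together.
theorem add_right_mono_le_and_lf (x y z : PGame) :
    (x ≤ y → x + z ≤ y + z) ∧ (x ⧏ y → x + z ⧏ y + z) := by
  induction x generalizing y z with
  | mk xl xr xL xR IHxl IHxr =>
  induction y generalizing z with
  | mk yl yr yL yR IHyl IHyr =>
  induction z with
  | mk zl zr zL zR IHzl IHzr =>
  constructor
  · intro h
    refine le_of_forall_lf (fun k => ?_) (fun k => ?_)
    · obtain ⟨i | i, rfl⟩ := exists_toLeftMovesAdd k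
      · rw [add_moveLeft_inl]; exact (IHxl i _ _).2 (moveLeft_lf_of_le h i)
      · rw [add_moveLeft_inr]
        exact lf_of_le_moveLeft (i := toLeftMovesAdd (Sum.inr i))
          (by rw [add_moveLeft_inr]; exact (IHzl i).1 h)
    · obtain ⟨j | j, rfl⟩ := exists_toRightMovesAdd k
      · rw [add_moveRight_inl]; exact (IHyr j _).2 (lf_moveRight_of_le h j)
      · rw [add_moveRight_inr]
        exact lf_of_moveRight_le (j := toRightMovesAdd (Sum.inr j))
          (by rw [add_moveRight_inr]; exact (IHzr j).1 h)
  · intro h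
    rcases lf_iff_exists_le.1 h with ⟨i, hi⟩ | ⟨j, hj⟩
    · exact lf_of_le_moveLeft (i := toLeftMovesAdd (Sum.inl i))
        (by rw [add_moveLeft_inl]; exact (IHyl i _).1 hi)
    · exact lf_of_moveRight_le (j := toRightMovesAdd (Sum.inl j))
        (by rw [add_moveRight_inl]; exact (IHxr j _ _).1 hj)

theorem add_le_add_right' {x y : PGame} (h : x ≤ y) (z : PGame) : x + z ≤ y + z :=
  (add_right_mono_le_and_lf x y z).1 h

theorem add_le_add_left' {x y : PGame} (h : x ≤ y) (z : PGame) : z + x ≤ z + y :=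
  le_trans (add_comm_le z x) (le_trans (add_le_add_right' h z) (add_comm_le y z))

theorem add_congr_left {x y : PGame} (h : x ≈ y) (z : PGame) : x + z ≈ y + z :=
  ⟨add_le_add_right' h.1 z, add_le_add_right' h.2 z⟩

theorem add_congr_right {x y : PGame} (h : x ≈ y) (z : PGame) : z + x ≈ z + y :=
  ⟨add_le_add_left' h.1 z, add_le_add_left' h.2 z⟩

theorem add_right_comm_equiv (x y z : PGame) : x + y + z ≈ x + z + y :=
  calc x + y + z ≈ x + (y + z) := add_assoc_equiv x y z
    _ ≈ x + (z + y) := add_congr_right (add_comm_equiv y z) x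
    _ ≈ x + z + y := (add_assoc_equiv x z y).symm

instance : Unique star.LeftMoves := inferInstanceAs (Unique PUnit)

instance : Unique star.RightMoves := inferInstanceAs (Unique PUnit)

@[simp]
theorem star_moveLeft (i : star.LeftMoves) : star.moveLeft i = 0 := rfl

@[simp]
theorem star_moveRight (j : star.RightMoves) : star.moveRight j = 0 := rfl

theorem zero_lf_star : 0 ⧏ star := lf_of_le_moveLeft (i := default) le_rfl

theorem star_add_star_equiv : star + star ≈ 0 := by
  have h₀ : (0 : PGame) + 0 ≈ 0 := add_zero_equiv 0
  refine ⟨le_of_forall_lf (fun k => ?_) (fun j => PEmpty.elim j),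
    le_of_forall_lf (fun i => PEmpty.elim i) (fun k => ?_)⟩
  · obtain ⟨i | i, rfl⟩ := exists_toLeftMovesAdd k <;> simp only [add_moveLeft_inl,
      add_moveLeft_inr, star_moveLeft]
    · exact lf_of_moveRight_le (j := toRightMovesAdd (Sum.inr default)) (by simpa using h₀.1)
    · exact lf_of_moveRight_le (j := toRightMovesAdd (Sum.inl default)) (by simpa using h₀.1)
  · obtain ⟨j | j, rfl⟩ := exists_toRightMovesAdd k <;> simp only [add_moveRight_inl,
      add_moveRight_inr, star_moveRight]
    · exact lf_of_le_moveLeft (i := toLeftMovesAdd (Sum.inr default)) (by simpa using h₀.2)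
    · exact lf_of_le_moveLeft (i := toLeftMovesAdd (Sum.inl default)) (by simpa using h₀.2)

theorem add_star_add_star_equiv (x : PGame) : x + star + star ≈ x :=
  calc x + star + star ≈ x + (star + star) := add_assoc_equiv x star star
    _ ≈ x + 0 := add_congr_right star_add_star_equiv x
    _ ≈ x := add_zero_equiv x

theorem add_star_lf_of_le {x y : PGame} (h : x ≤ y) : x + star ⧏ y := by
  refine lf_of_moveRight_le (j := toRightMovesAdd (Sum.inr (default : star.RightMoves))) ?_
  simpa using le_of_equiv_of_le (add_zero_equiv x) h

theorem lf_add_star_of_le {x y : PGame} (h : x ≤ y) : x ⧏ y + star := by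
  refine lf_of_le_moveLeft (i := toLeftMovesAdd (Sum.inr (default : star.LeftMoves))) ?_
  simpa using le_of_le_of_equiv h (add_zero_equiv y).symm

section SingleOptions

variable {a b x : PGame.{u}}

instance : Unique (ofLists [a] [b]).LeftMoves := inferInstanceAs (Unique (ULift (Fin 1)))

instance : Unique (ofLists [a] [b]).RightMoves := inferInstanceAs (Unique (ULift (Fin 1)))

@[simp]
theorem ofLists_single_moveLeft (i : (ofLists [a] [b]).LeftMoves) :
    (ofLists [a] [b]).moveLeft i = a := by
  rw [Unique.eq_default i]; rfl

@[simp]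
theorem ofLists_single_moveRight (j : (ofLists [a] [b]).RightMoves) :
    (ofLists [a] [b]).moveRight j = b := by
  rw [Unique.eq_default j]; rfl

theorem lf_ofLists_single_of_le (h : x ≤ a) : x ⧏ ofLists [a] [b] :=
  lf_of_le_moveLeft (i := default) (by rwa [ofLists_single_moveLeft])

theorem ofLists_single_lf_of_le (h : b ≤ x) : ofLists [a] [b] ⧏ x :=
  lf_of_moveRight_le (j := default) (by rwa [ofLists_single_moveRight])

theorem le_ofLists_single (hL : ∀ i, x.moveLeft i ⧏ ofLists [a] [b]) (hR : x ⧏ b) :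
    x ≤ ofLists [a] [b] :=
  le_of_forall_lf hL fun j => by rwa [ofLists_single_moveRight]

theorem ofLists_single_le (hL : a ⧏ x) (hR : ∀ j, ofLists [a] [b] ⧏ x.moveRight j) :
    ofLists [a] [b] ≤ x :=
  le_of_forall_lf (fun i => by rwa [ofLists_single_moveLeft]) hR

end SingleOptions

theorem add_star_le_ofLists_single {a b x : PGame}
    (hL : ∀ i, x.moveLeft i + star ⧏ ofLists [a] [b]) (h : x ⧏ ofLists [a] [b])
    (hR : x + star ⧏ b) : x + star ≤ ofLists [a] [b] := by
  refine le_ofLists_single (fun k => ?_) hR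
  obtain ⟨i | i, rfl⟩ := exists_toLeftMovesAdd k
  · simpa using hL i
  · simpa using lf_of_equiv_of_lf (add_zero_equiv x) h

theorem copies_succ (k : ℕ) (x : PGame) : copies (k + 1) x = copies k x + x := rfl

theorem copies_mono {x : PGame} (hx : 0 ≤ x) : Monotone (copies · x) :=
  monotone_nat_of_le_succ fun k =>
    le_of_equiv_of_le (add_zero_equiv (copies k x)).symm (add_le_add_left' hx (copies k x))

theorem zero_le_copies {x : PGame} (hx : 0 ≤ x) (k : ℕ) : 0 ≤ copies k x :=
  copies_mono hx (Nat.zero_le k)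

end PGame

end SetTheory

instance : Unique upG.LeftMoves := inferInstanceAs (Unique (ofLists [0] [star]).LeftMoves)

instance : Unique upG.RightMoves := inferInstanceAs (Unique (ofLists [0] [star]).RightMoves)

@[simp]
theorem upG_moveLeft (i : upG.LeftMoves) : upG.moveLeft i = 0 := ofLists_single_moveLeft i

@[simp]
theorem upG_moveRight (j : upG.RightMoves) : upG.moveRight j = star := ofLists_single_moveRight j

theorem zero_le_upG : 0 ≤ upG :=
  le_of_forall_lf (fun i => PEmpty.elim i) fun j => by rw [upG_moveRight]; exact zero_lf_star

theorem copies_upG_mono : Monotone (copies · upG) := copies_mono zero_le_upG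

theorem copies_succ_upG_moveLeft_equiv (k : ℕ) :
    ∀ i : (copies (k + 1) upG).LeftMoves, (copies (k + 1) upG).moveLeft i ≈ copies k upG := by
  induction k with
  | zero =>
    rw [copies_succ]
    intro i
    obtain ⟨i | i, rfl⟩ := exists_toLeftMovesAdd i
    · exact PEmpty.elim i
    · simpa using add_zero_equiv _
  | succ k ih =>
    rw [copies_succ]
    intro i
    obtain ⟨i | i, rfl⟩ := exists_toLeftMovesAdd i
    · rw [add_moveLeft_inl]
      exact add_congr_left (ih i) upG
    · simpa using add_zero_equiv _

theorem copies_succ_upG_moveRight_equiv (k : ℕ) :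
    ∀ j : (copies (k + 1) upG).RightMoves,
      (copies (k + 1) upG).moveRight j ≈ copies k upG + star := by
  induction k with
  | zero =>
    rw [copies_succ]
    intro j
    obtain ⟨j | j, rfl⟩ := exists_toRightMovesAdd j
    · exact PEmpty.elim j
    · simpa using equiv_rfl
  | succ k ih =>
    rw [copies_succ]
    intro j
    obtain ⟨j | j, rfl⟩ := exists_toRightMovesAdd j
    · rw [add_moveRight_inl]
      exact (add_congr_left (ih j) upG).trans (add_right_comm_equiv _ star upG)
    · simpa using equiv_rfl

theorem copies_upG_lf_copies_upG {k m : ℕ} (h : k < m) : copies k upG ⧏ copies m upG := by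
  obtain ⟨m, rfl⟩ := Nat.exists_eq_add_of_lt h
  refine lf_of_le_moveLeft (i := toLeftMovesAdd (Sum.inr default)) ?_
  exact le_of_le_of_equiv (copies_upG_mono (by omega))
    (copies_succ_upG_moveLeft_equiv _ _).symm

theorem copies_succ_upG_lf_of_add_star_le {k : ℕ} {x : PGame} (h : copies k upG + star ≤ x) :
    copies (k + 1) upG ⧏ x :=
  lf_of_moveRight_le (j := toRightMovesAdd (Sum.inr default))
    (le_of_equiv_of_le (copies_succ_upG_moveRight_equiv k _) h)

theorem copies_succ_upG_add_star_lf_of_le {k : ℕ} {x : PGame} (h : copies k upG ≤ x) :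
    copies (k + 1) upG + star ⧏ x := by
  have j : (copies (k + 1) upG).RightMoves := toRightMovesAdd (Sum.inr default)
  refine lf_of_moveRight_le (j := toRightMovesAdd (Sum.inl j)) ?_
  rw [add_moveRight_inl]
  exact le_of_equiv_of_le
    ((add_congr_left (copies_succ_upG_moveRight_equiv k j) star).trans
      (add_star_add_star_equiv _)) h

theorem copies_upG_cmp_ofLists {m : ℕ} (hm : 1 ≤ m) (k : ℕ) :
    (k < m → copies k upG.{u} ≤ ofLists [0] [copies m upG]) ∧
    (k ≤ m + 1 → copies k upG.{u} ⧏ ofLists [0] [copies m upG]) ∧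
    (k ≤ m → copies k upG.{u} + star ⧏ ofLists [0] [copies m upG]) ∧
    (k ≤ m + 1 → copies k upG.{u} + star ≤ ofLists [0] [copies m upG]) := by
  induction k with
  | zero =>
    have hle : copies 0 upG ≤ ofLists [0] [copies m upG] :=
      le_ofLists_single (fun i => PEmpty.elim i) (copies_upG_lf_copies_upG hm)
    have hlf : copies 0 upG ⧏ ofLists [0] [copies m upG] := lf_ofLists_single_of_le le_rfl
    refine ⟨fun _ => hle, fun _ => hlf, fun _ => add_star_lf_of_le hle, fun _ => ?_⟩
    exact add_star_le_ofLists_single (fun i => PEmpty.elim i) hlf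
      (add_star_lf_of_le (zero_le_copies zero_le_upG m))
  | succ k ih =>
    obtain ⟨ihLE, ihLF, ihStarLF, ihStarLE⟩ := ih
    have hlf (hk : k + 1 ≤ m + 1) : copies (k + 1) upG ⧏ ofLists [0] [copies m upG] :=
      copies_succ_upG_lf_of_add_star_le (ihStarLE (by omega))
    refine ⟨fun hk => ?_, hlf, fun hk => copies_succ_upG_add_star_lf_of_le (ihLE (by omega)),
      fun hk => ?_⟩
    · exact le_ofLists_single
        (fun i => lf_of_equiv_of_lf (copies_succ_upG_moveLeft_equiv k i) (ihLF (by omega)))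
        (copies_upG_lf_copies_upG hk)
    · exact add_star_le_ofLists_single
        (fun i => lf_of_equiv_of_lf (add_congr_left (copies_succ_upG_moveLeft_equiv k i) star)
          (ihStarLF (by omega)))
        (hlf hk) (copies_succ_upG_add_star_lf_of_le (copies_upG_mono (by omega)))

theorem ofLists_le_copies_succ_upG_add_star (m : ℕ) :
    ofLists [0] [copies m upG] ≤ copies (m + 1) upG + star := by
  refine ofLists_single_le (lf_add_star_of_le (zero_le_copies zero_le_upG _)) fun k => ?_
  obtain ⟨j | j, rfl⟩ := exists_toRightMovesAdd k
  · rw [add_moveRight_inl]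
    exact ofLists_single_lf_of_le
      ((add_congr_left (copies_succ_upG_moveRight_equiv m j) star).trans
        (add_star_add_star_equiv _)).2
  · rw [add_moveRight_inr, star_moveRight]
    exact ofLists_single_lf_of_le
      (le_of_le_of_equiv (copies_upG_mono (Nat.le_succ m)) (add_zero_equiv _).symm)

theorem stmt3 : ∀ n : ℕ, 2 ≤ n →
    copies n upG + star ≈ ofLists [0] [copies (n - 1) upG] := by
  intro n hn
  obtain ⟨m, rfl⟩ : ∃ m, n = m + 1 := ⟨n - 1, by omega⟩
  rw [Nat.add_sub_cancel]
  exact ⟨(copies_upG_cmp_ofLists (by omega) (m + 1)).2.2.2 le_rfl,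
    ofLists_le_copies_succ_upG_add_star m⟩
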